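/- Let r₀ ≤ 0 and let V = {(q,r,s) ∈ ℝ³ : r < r₀}. Then for every t ≥ 0 the map Φ_t restricted to V is injective, its derivative at every point of V is a linear isomorphism of ℝ³, its image Φ_t(V) is open in ℝ³, and Φ_t restricted to V is a homeomorphism onto Φ_t(V) with smooth inverse; i.e. for every fixed time the Lagrangian flow map is a global diffeomorphism from the labelling domain V onto an open subset of ℝ³. -/

import Mathlib

noncomputable def PhiT (k c lam t : ℝ) (p : Fin 3 → ℝ) : Fin 3 → ℝ :=
  ![p 0 - (1 / k) * Real.exp (k * (p 1 - lam * (p 2) ^ 2)) * Real.sin (k * (p 0 - c * t)),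
    p 2,
    p 1 + (1 / k) * Real.exp (k * (p 1 - lam * (p 2) ^ 2)) * Real.cos (k * (p 0 - c * t))]

open Real ContinuousLinearMap Topology Filter

/-- The explicit derivative of `PhiT` at `p`. -/
noncomputable def DPhi (k c lam t : ℝ) (p : Fin 3 → ℝ) : (Fin 3 → ℝ) →L[ℝ] (Fin 3 → ℝ) :=
  ContinuousLinearMap.pi
    ![(1 - exp (k * (p 1 - lam * p 2 ^ 2)) * cos (k * (p 0 - c * t))) • proj 0 +
        (-(exp (k * (p 1 - lam * p 2 ^ 2)) * sin (k * (p 0 - c * t)))) • proj 1 +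
        (2 * lam * p 2 * exp (k * (p 1 - lam * p 2 ^ 2)) * sin (k * (p 0 - c * t))) • proj 2,
      proj 2,
      (-(exp (k * (p 1 - lam * p 2 ^ 2)) * sin (k * (p 0 - c * t)))) • proj 0 +
        (1 + exp (k * (p 1 - lam * p 2 ^ 2)) * cos (k * (p 0 - c * t))) • proj 1 +
        (-(2 * lam * p 2 * exp (k * (p 1 - lam * p 2 ^ 2)) * cos (k * (p 0 - c * t)))) • proj 2]

lemma hasFDerivAt_PhiT (k c lam t : ℝ) (hk : k ≠ 0) (p : Fin 3 → ℝ) :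
    HasFDerivAt (PhiT k c lam t) (DPhi k c lam t p) p := by
  apply hasFDerivAt_pi'.2
  have h0 : HasFDerivAt (fun q : Fin 3 → ℝ => q 0) (proj 0 : (Fin 3 → ℝ) →L[ℝ] ℝ) p :=
    hasFDerivAt_apply 0 p
  have h1 : HasFDerivAt (fun q : Fin 3 → ℝ => q 1) (proj 1 : (Fin 3 → ℝ) →L[ℝ] ℝ) p :=
    hasFDerivAt_apply 1 p
  have h2 : HasFDerivAt (fun q : Fin 3 → ℝ => q 2) (proj 2 : (Fin 3 → ℝ) →L[ℝ] ℝ) p :=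
    hasFDerivAt_apply 2 p
  have hu : HasFDerivAt (fun q : Fin 3 → ℝ => k * (q 1 - lam * q 2 ^ 2))
      (k • ((proj 1 : (Fin 3 → ℝ) →L[ℝ] ℝ) - lam • ((p 2 • proj 2) + (p 2 • proj 2)))) p := by
    have hsq : HasFDerivAt (fun q : Fin 3 → ℝ => q 2 * q 2)
        ((p 2 • proj 2) + (p 2 • proj 2) : (Fin 3 → ℝ) →L[ℝ] ℝ) p := h2.mul h2
    have := ((h1.sub (hsq.const_mul lam)).const_mul k)
    exact this.congr_of_eventuallyEq (by filter_upwards with q; simp only [Pi.sub_apply]; ring)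
  have hv : HasFDerivAt (fun q : Fin 3 → ℝ => k * (q 0 - c * t))
      (k • (proj 0 : (Fin 3 → ℝ) →L[ℝ] ℝ)) p := by
    have := (h0.sub_const (c * t)).const_mul k
    simpa using this
  have hexp : HasFDerivAt (fun q : Fin 3 → ℝ => exp (k * (q 1 - lam * q 2 ^ 2)))
      (exp (k * (p 1 - lam * p 2 ^ 2)) •
        (k • ((proj 1 : (Fin 3 → ℝ) →L[ℝ] ℝ) - lam • ((p 2 • proj 2) + (p 2 • proj 2))))) p :=
    (Real.hasDerivAt_exp _).comp_hasFDerivAt p hu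
  have hsin : HasFDerivAt (fun q : Fin 3 → ℝ => sin (k * (q 0 - c * t)))
      (cos (k * (p 0 - c * t)) • (k • (proj 0 : (Fin 3 → ℝ) →L[ℝ] ℝ))) p :=
    (Real.hasDerivAt_sin _).comp_hasFDerivAt p hv
  have hcos : HasFDerivAt (fun q : Fin 3 → ℝ => cos (k * (q 0 - c * t)))
      ((-sin (k * (p 0 - c * t))) • (k • (proj 0 : (Fin 3 → ℝ) →L[ℝ] ℝ))) p :=
    (Real.hasDerivAt_cos _).comp_hasFDerivAt p hv
  intro i
  fin_cases i
  · show HasFDerivAt (fun x => PhiT k c lam t x 0)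
      ((proj 0 : (Fin 3 → ℝ) →L[ℝ] ℝ).comp (DPhi k c lam t p)) p
    have hh := h0.sub ((hexp.mul hsin).const_mul (1 / k))
    have heq : (fun q : Fin 3 → ℝ => q 0 -
        1 / k * (exp (k * (q 1 - lam * q 2 ^ 2)) * sin (k * (q 0 - c * t)))) =
        fun x => PhiT k c lam t x 0 := by
      funext q; simp [PhiT]; ring
    replace hh := hh.congr_of_eventuallyEq (f₁ := fun x => PhiT k c lam t x 0) (by
      filter_upwards with q; simp only [Pi.sub_apply, Pi.mul_apply]; exact (congrFun heq q).symm)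
    refine hh.congr_fderiv (ContinuousLinearMap.ext fun v => ?_)
    simp [DPhi, PhiT]
    field_simp
    ring
  · show HasFDerivAt (fun x => PhiT k c lam t x 1)
      ((proj 1 : (Fin 3 → ℝ) →L[ℝ] ℝ).comp (DPhi k c lam t p)) p
    have heq : (fun q : Fin 3 → ℝ => q 2) = fun x => PhiT k c lam t x 1 := by
      funext q; simp [PhiT]
    rw [heq] at h2
    exact h2.congr_fderiv (ContinuousLinearMap.ext fun v => by simp [DPhi])
  · show HasFDerivAt (fun x => PhiT k c lam t x 2)
      ((proj 2 : (Fin 3 → ℝ) →L[ℝ] ℝ).comp (DPhi k c lam t p)) p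
    have hh := h1.add ((hexp.mul hcos).const_mul (1 / k))
    have heq : (fun q : Fin 3 → ℝ => q 1 +
        1 / k * (exp (k * (q 1 - lam * q 2 ^ 2)) * cos (k * (q 0 - c * t)))) =
        fun x => PhiT k c lam t x 2 := by
      funext q; simp [PhiT]; ring
    replace hh := hh.congr_of_eventuallyEq (f₁ := fun x => PhiT k c lam t x 2) (by
      filter_upwards with q; simp only [Pi.add_apply, Pi.mul_apply]; exact (congrFun heq q).symm)
    refine hh.congr_fderiv (ContinuousLinearMap.ext fun v => ?_)
    simp [DPhi, PhiT]
    field_simp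
    ring

lemma contDiff_PhiT (k c lam t : ℝ) : ContDiff ℝ (⊤ : ℕ∞) (PhiT k c lam t) := by
  apply contDiff_pi.2
  intro i
  have capp : ∀ j : Fin 3, ContDiff ℝ (⊤ : ℕ∞) (fun x : Fin 3 → ℝ => x j) := fun j =>
    (ContinuousLinearMap.proj (R := ℝ) (φ := fun _ : Fin 3 => ℝ) j).contDiff
  have cexp' : ContDiff ℝ (⊤ : ℕ∞) (fun x : Fin 3 → ℝ => Real.exp (k * (x 1 - lam * x 2 ^ 2))) :=
    Real.contDiff_exp.comp (by fun_prop)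
  have csin : ContDiff ℝ (⊤ : ℕ∞) (fun x : Fin 3 → ℝ => Real.sin (k * (x 0 - c * t))) :=
    Real.contDiff_sin.comp (by fun_prop)
  have ccos : ContDiff ℝ (⊤ : ℕ∞) (fun x : Fin 3 → ℝ => Real.cos (k * (x 0 - c * t))) :=
    Real.contDiff_cos.comp (by fun_prop)
  have c0 : ContDiff ℝ (⊤ : ℕ∞) (fun x : Fin 3 → ℝ =>
      x 0 - 1 / k * Real.exp (k * (x 1 - lam * x 2 ^ 2)) * Real.sin (k * (x 0 - c * t))) :=
    (capp 0).sub ((contDiff_const.mul cexp').mul csin)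
  have c1 : ContDiff ℝ (⊤ : ℕ∞) (fun x : Fin 3 → ℝ => x 2) := capp 2
  have c2 : ContDiff ℝ (⊤ : ℕ∞) (fun x : Fin 3 → ℝ =>
      x 1 + 1 / k * Real.exp (k * (x 1 - lam * x 2 ^ 2)) * Real.cos (k * (x 0 - c * t))) :=
    (capp 1).add ((contDiff_const.mul cexp').mul ccos)
  fin_cases i
  · exact c0
  · exact c1
  · exact c2

lemma dphi_inj (k c lam t : ℝ) (hk : 0 < k) (p : Fin 3 → ℝ) (hE : k * (p 1 - lam * p 2 ^ 2) < 0) :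
    Function.Injective (DPhi k c lam t p) := by
  set E := exp (k * (p 1 - lam * p 2 ^ 2)) with hEdef
  have hE1 : E < 1 := by rw [hEdef]; exact exp_lt_one_iff.2 hE
  have hE0 : (0:ℝ) < E := exp_pos _
  have hsc := sin_sq_add_cos_sq (k * (p 0 - c * t))
  intro v w hvw
  have h := sub_eq_zero.2 hvw
  rw [← map_sub] at h
  set u := v - w with hu
  have hz : ∀ i, DPhi k c lam t p u i = 0 := fun i => by rw [h]; rfl
  have hz0 := hz 0
  have hz1 := hz 1
  have hz2 := hz 2
  simp only [DPhi, ContinuousLinearMap.pi_apply, Matrix.cons_val_zero, Matrix.cons_val_one,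
    Matrix.head_cons, Matrix.cons_val_two, Matrix.tail_cons, ContinuousLinearMap.add_apply,
    ContinuousLinearMap.smul_apply, ContinuousLinearMap.proj_apply, smul_eq_mul] at hz0 hz1 hz2
  have hu2 : u 2 = 0 := hz1
  rw [hu2] at hz0 hz2
  set S := sin (k * (p 0 - c * t))
  set C := cos (k * (p 0 - c * t))
  have e1 : u 0 = E * (C * u 0 + S * u 1) := by linarith [hz0]
  have e2 : u 1 = E * (S * u 0 - C * u 1) := by linarith [hz2]
  have key : u 0 ^ 2 + u 1 ^ 2 = E ^ 2 * (u 0 ^ 2 + u 1 ^ 2) := by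
    calc u 0 ^ 2 + u 1 ^ 2 = (E * (C * u 0 + S * u 1)) ^ 2 + (E * (S * u 0 - C * u 1)) ^ 2 := by
          rw [← e1, ← e2]
      _ = E ^ 2 * (u 0 ^ 2 + u 1 ^ 2) := by linear_combination (E ^ 2 * (u 0 ^ 2 + u 1 ^ 2)) * hsc
  have hfac : (1 - E ^ 2) * (u 0 ^ 2 + u 1 ^ 2) = 0 := by linear_combination key
  have hpos : 0 < 1 - E ^ 2 := by nlinarith
  have hsum : u 0 ^ 2 + u 1 ^ 2 = 0 :=
    (mul_eq_zero.1 hfac).resolve_left (ne_of_gt hpos)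
  have h00 : u 0 = 0 := by
    have h1' := sq_nonneg (u 0); have h2' := sq_nonneg (u 1)
    have : u 0 ^ 2 = 0 := by linarith
    exact pow_eq_zero_iff two_ne_zero |>.mp this
  have h11 : u 1 = 0 := by
    have h1' := sq_nonneg (u 0); have h2' := sq_nonneg (u 1)
    have : u 1 ^ 2 = 0 := by linarith
    exact pow_eq_zero_iff two_ne_zero |>.mp this
  have : u = 0 := by
    funext i; fin_cases i <;> simpa [hu] using (by assumption : _)
  have := sub_eq_zero.1 (hu ▸ this)
  exact this

lemma one_sub_cos_le_half_sq (x : ℝ) : 1 - Real.cos x ≤ x ^ 2 / 2 := by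
  have hx : Real.cos x = Real.cos (2 * (x / 2)) := by congr 1; ring
  rw [hx]
  nlinarith [Real.cos_two_mul (x / 2), Real.sin_sq_add_cos_sq (x / 2),
    Real.sin_sq_le_sq (x := x / 2)]

lemma abs_exp_sub_exp_le (a b : ℝ) :
    |Real.exp a - Real.exp b| ≤ max (Real.exp a) (Real.exp b) * |a - b| := by
  wlog h : b ≤ a generalizing a b
  · have := this b a (le_of_not_ge h)
    rwa [abs_sub_comm, abs_sub_comm b a, max_comm] at this
  have h2 := Real.add_one_le_exp (b - a)
  have h3 : Real.exp a * (b - a + 1) ≤ Real.exp a * Real.exp (b - a) :=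
    mul_le_mul_of_nonneg_left h2 (Real.exp_pos a).le
  have h4 : Real.exp a * Real.exp (b - a) = Real.exp b := by
    rw [← Real.exp_add]; ring_nf
  have h5 : Real.exp a - Real.exp b ≤ Real.exp a * (a - b) := by nlinarith
  have hm : Real.exp b ≤ Real.exp a := Real.exp_le_exp.2 h
  rw [abs_of_nonneg (by linarith), abs_of_nonneg (by linarith : (0:ℝ) ≤ a - b),
    max_eq_left hm]
  exact h5

lemma gerstner_core {a b θ θ' α : ℝ} (ha : a < 0) (hb : b < 0)
    (hab : a - b = Real.exp b * Real.cos θ' - Real.exp a * Real.cos θ)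
    (hα : α = Real.exp a * Real.sin θ - Real.exp b * Real.sin θ')
    (hθ : θ - θ' = α) : α = 0 ∧ a = b := by
  set E1 := Real.exp a with hE1
  set E2 := Real.exp b with hE2
  set N := max E1 E2 with hN
  have hN1 : N < 1 := max_lt (Real.exp_lt_one_iff.2 ha) (Real.exp_lt_one_iff.2 hb)
  have hE1p : (0:ℝ) < E1 := Real.exp_pos a
  have hE2p : (0:ℝ) < E2 := Real.exp_pos b
  have hEE : E1 * E2 ≤ N ^ 2 := by
    have h1 : E1 ≤ N := le_max_left _ _
    have h2 : E2 ≤ N := le_max_right _ _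
    nlinarith
  have hdiff := abs_exp_sub_exp_le a b
  have hsq : (E1 - E2) ^ 2 ≤ N ^ 2 * (a - b) ^ 2 := by
    have := pow_le_pow_left₀ (abs_nonneg (E1 - E2)) hdiff 2
    rw [sq_abs, mul_pow, sq_abs] at this
    exact this
  have hcs : Real.cos α = Real.cos θ * Real.cos θ' + Real.sin θ * Real.sin θ' := by
    rw [← hθ, Real.cos_sub]
  have hid : α ^ 2 + (a - b) ^ 2 = E1 ^ 2 + E2 ^ 2 -
      2 * E1 * E2 * (Real.cos θ * Real.cos θ' + Real.sin θ * Real.sin θ') := by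
    linear_combination (α + (E1 * Real.sin θ - E2 * Real.sin θ')) * hα +
      ((a - b) + (E2 * Real.cos θ' - E1 * Real.cos θ)) * hab +
      E1 ^ 2 * (Real.sin_sq_add_cos_sq θ) + E2 ^ 2 * (Real.sin_sq_add_cos_sq θ')
  rw [← hcs] at hid
  have hid2 : α ^ 2 + (a - b) ^ 2 = (E1 - E2) ^ 2 + 2 * (E1 * E2) * (1 - Real.cos α) := by
    linear_combination hid
  have hcos0 : (0:ℝ) ≤ 1 - Real.cos α := by linarith [Real.cos_le_one α]
  have hcos := one_sub_cos_le_half_sq α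
  have h5 : E1 * E2 * (1 - Real.cos α) ≤ N ^ 2 * (1 - Real.cos α) :=
    mul_le_mul_of_nonneg_right hEE hcos0
  have h6 : N ^ 2 * (1 - Real.cos α) ≤ N ^ 2 * (α ^ 2 / 2) :=
    mul_le_mul_of_nonneg_left hcos (sq_nonneg N)
  have hfin : α ^ 2 + (a - b) ^ 2 ≤ N ^ 2 * (α ^ 2 + (a - b) ^ 2) := by
    nlinarith [hsq, h5, h6, hid2]
  have hN0 : (0:ℝ) < N := lt_max_of_lt_left hE1p
  have hzero : α ^ 2 + (a - b) ^ 2 ≤ 0 := by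
    by_contra hpos
    push_neg at hpos
    have hN2 : N ^ 2 < 1 := by nlinarith
    have h7 := mul_lt_mul_of_pos_right hN2 hpos
    rw [one_mul] at h7
    linarith
  have hα0 : α = 0 := by
    have h' : α ^ 2 = 0 := le_antisymm (by linarith [sq_nonneg (a - b)]) (sq_nonneg α)
    exact sq_eq_zero_iff.mp h'
  have hab0 : a - b = 0 := by
    have h' : (a - b) ^ 2 = 0 := le_antisymm (by linarith [sq_nonneg α]) (sq_nonneg (a - b))
    exact sq_eq_zero_iff.mp h'
  exact ⟨hα0, by linarith⟩

lemma injOn_PhiT (k c lam r₀ t : ℝ) (hk : 0 < k) (hlam : 0 ≤ lam) (hr₀ : r₀ ≤ 0) :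
    Set.InjOn (PhiT k c lam t) {p : Fin 3 → ℝ | p 1 < r₀} := by
  intro p hp p' hp' h
  have hk' : k ≠ 0 := ne_of_gt hk
  have h0 := congrFun h 0
  have h1 := congrFun h 1
  have h2 := congrFun h 2
  simp only [PhiT, Matrix.cons_val_zero, Matrix.cons_val_one, Matrix.head_cons,
    Matrix.cons_val_two, Matrix.tail_cons] at h0 h1 h2
  -- h1 : p 2 = p' 2
  rw [← h1] at h0 h2
  have hp1 : p 1 < r₀ := hp
  have hp1' : p' 1 < r₀ := hp'
  have hsqn : 0 ≤ lam * p 2 ^ 2 := mul_nonneg hlam (sq_nonneg _)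
  have ha : k * (p 1 - lam * p 2 ^ 2) < 0 := by nlinarith
  have hb : k * (p' 1 - lam * p 2 ^ 2) < 0 := by nlinarith
  have hα : k * (p 0 - p' 0) =
      Real.exp (k * (p 1 - lam * p 2 ^ 2)) * Real.sin (k * (p 0 - c * t)) -
      Real.exp (k * (p' 1 - lam * p 2 ^ 2)) * Real.sin (k * (p' 0 - c * t)) := by
    field_simp at h0
    linear_combination h0
  have hab : k * (p 1 - lam * p 2 ^ 2) - k * (p' 1 - lam * p 2 ^ 2) =
      Real.exp (k * (p' 1 - lam * p 2 ^ 2)) * Real.cos (k * (p' 0 - c * t)) -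
      Real.exp (k * (p 1 - lam * p 2 ^ 2)) * Real.cos (k * (p 0 - c * t)) := by
    field_simp at h2
    linear_combination h2
  have hθ : k * (p 0 - c * t) - k * (p' 0 - c * t) = k * (p 0 - p' 0) := by ring
  obtain ⟨hα0, hab0⟩ := gerstner_core ha hb hab hα hθ
  have hq : p 0 = p' 0 := by
    have := mul_eq_zero.1 hα0
    rcases this with h' | h'
    · exact absurd h' hk'
    · linarith
  have hr : p 1 = p' 1 := by
    have : k * (p 1 - p' 1) = 0 := by linarith
    rcases mul_eq_zero.1 this with h' | h'
    · exact absurd h' hk'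
    · linarith
  funext i
  fin_cases i
  · exact hq
  · exact hr
  · exact h1

lemma exists_CLE (k c lam t : ℝ) (hk : 0 < k) (hlam : 0 ≤ lam) (p : Fin 3 → ℝ)
    (hp : p 1 < 0) :
    ∃ A : (Fin 3 → ℝ) ≃L[ℝ] (Fin 3 → ℝ),
      (A : (Fin 3 → ℝ) →L[ℝ] (Fin 3 → ℝ)) = DPhi k c lam t p := by
  have hEneg : k * (p 1 - lam * p 2 ^ 2) < 0 := by
    nlinarith [mul_nonneg hlam (sq_nonneg (p 2))]
  have hinj := dphi_inj k c lam t hk p hEneg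
  have hsurj : Function.Surjective ((DPhi k c lam t p) :
      (Fin 3 → ℝ) →ₗ[ℝ] (Fin 3 → ℝ)) := LinearMap.injective_iff_surjective.1 hinj
  let e : (Fin 3 → ℝ) ≃ₗ[ℝ] (Fin 3 → ℝ) :=
    LinearEquiv.ofBijective ((DPhi k c lam t p) : (Fin 3 → ℝ) →ₗ[ℝ] (Fin 3 → ℝ)) ⟨hinj, hsurj⟩
  exact ⟨e.toContinuousLinearEquiv, by ext v; rfl⟩

/-- for `r₀ ≤ 0` and every `t ≥ 0`, on `V = {r < r₀}` the map
`Φ_t` is injective, has everywhere invertible derivative, its image is open,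
and `Φ_t` is a homeomorphism from `V` onto `Φ_t(V)` with smooth inverse: at
every fixed time the Lagrangian flow map is a global diffeomorphism from the
labelling domain `V` onto an open subset of ℝ³. -/
theorem stmt8 (k c lam r₀ : ℝ) (hk : 0 < k) (hc : 0 < c) (hlam : 0 ≤ lam)
    (hr₀ : r₀ ≤ 0) (t : ℝ) (ht : 0 ≤ t) :
    Set.InjOn (PhiT k c lam t) {p : Fin 3 → ℝ | p 1 < r₀} ∧
    (∀ p : Fin 3 → ℝ, p 1 < r₀ →
      ∃ A : (Fin 3 → ℝ) ≃L[ℝ] (Fin 3 → ℝ),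
        HasFDerivAt (PhiT k c lam t) (A : (Fin 3 → ℝ) →L[ℝ] (Fin 3 → ℝ)) p) ∧
    IsOpen (PhiT k c lam t '' {p : Fin 3 → ℝ | p 1 < r₀}) ∧
    ∃ Ψ : (Fin 3 → ℝ) → (Fin 3 → ℝ),
      ContDiffOn ℝ (⊤ : ℕ∞) Ψ (PhiT k c lam t '' {p : Fin 3 → ℝ | p 1 < r₀}) ∧
      (∀ p : Fin 3 → ℝ, p 1 < r₀ → Ψ (PhiT k c lam t p) = p) ∧
      (∀ y ∈ PhiT k c lam t '' {p : Fin 3 → ℝ | p 1 < r₀}, PhiT k c lam t (Ψ y) = y) := by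
  have hk' : k ≠ 0 := ne_of_gt hk
  set Φ := PhiT k c lam t with hΦdef
  set V : Set (Fin 3 → ℝ) := {p : Fin 3 → ℝ | p 1 < r₀} with hVdef
  have hVopen : IsOpen V := by
    have : V = (fun p : Fin 3 → ℝ => p 1) ⁻¹' Set.Iio r₀ := rfl
    rw [this]
    exact (continuous_apply 1).isOpen_preimage _ isOpen_Iio
  have hinj := injOn_PhiT k c lam r₀ t hk hlam hr₀
  have hcd := contDiff_PhiT k c lam t
  -- derivative data at points of V
  have hder : ∀ p : Fin 3 → ℝ, p 1 < r₀ →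
      ∃ A : (Fin 3 → ℝ) ≃L[ℝ] (Fin 3 → ℝ),
        HasFDerivAt Φ (A : (Fin 3 → ℝ) →L[ℝ] (Fin 3 → ℝ)) p := by
    intro p hp
    obtain ⟨A, hA⟩ := exists_CLE k c lam t hk hlam p (lt_of_lt_of_le hp hr₀)
    exact ⟨A, by rw [hA]; exact hasFDerivAt_PhiT k c lam t hk' p⟩
  -- open image
  have hopen : IsOpen (Φ '' V) := by
    rw [isOpen_iff_mem_nhds]
    rintro y ⟨p, hp, rfl⟩
    obtain ⟨A, hA⟩ := hder p hp
    have hsf : HasStrictFDerivAt Φ (A : (Fin 3 → ℝ) →L[ℝ] (Fin 3 → ℝ)) p :=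
      hcd.contDiffAt.hasStrictFDerivAt' hA (by simp)
    have hmap := hsf.map_nhds_eq_of_equiv
    rw [← hmap]
    exact Filter.image_mem_map (hVopen.mem_nhds hp)
  refine ⟨hinj, hder, hopen, Function.invFunOn Φ V, ?_, ?_, ?_⟩
  · -- smoothness of the inverse
    rintro y ⟨p, hp, rfl⟩
    apply ContDiffAt.contDiffWithinAt
    obtain ⟨A, hA⟩ := hder p hp
    have hsf : HasStrictFDerivAt Φ (A : (Fin 3 → ℝ) →L[ℝ] (Fin 3 → ℝ)) p :=
      hcd.contDiffAt.hasStrictFDerivAt' hA (by simp)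
    have hg : ContDiffAt ℝ (⊤ : ℕ∞) (hsf.localInverse Φ A p) (Φ p) := by
      have := hcd.contDiffAt.to_localInverse (f' := A) hA (by simp)
      exact this
    have h1 := hsf.eventually_right_inverse
    have h2 : ∀ᶠ y' in 𝓝 (Φ p), hsf.localInverse Φ A p y' ∈ V := by
      have hc := hsf.localInverse_continuousAt
      have hmem : hsf.localInverse Φ A p (Φ p) ∈ V := by
        rw [hsf.localInverse_apply_image]; exact hp
      exact hc.preimage_mem_nhds (hVopen.mem_nhds hmem)
    have h3 : ∀ᶠ y' in 𝓝 (Φ p), y' ∈ Φ '' V := hopen.mem_nhds ⟨p, hp, rfl⟩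
    have heq : Function.invFunOn Φ V =ᶠ[𝓝 (Φ p)] hsf.localInverse Φ A p := by
      filter_upwards [h1, h2, h3] with y' hy1 hy2 hy3
      have hmemΨ : Function.invFunOn Φ V y' ∈ V := Function.invFunOn_mem
        (by rcases hy3 with ⟨q, hq, rfl⟩; exact ⟨q, hq, rfl⟩)
      have hΦΨ : Φ (Function.invFunOn Φ V y') = y' := Function.invFunOn_eq
        (by rcases hy3 with ⟨q, hq, rfl⟩; exact ⟨q, hq, rfl⟩)
      exact hinj hmemΨ hy2 (by show Φ _ = Φ _; rw [hΦΨ, hy1])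
    exact hg.congr_of_eventuallyEq heq
  · intro p hp
    exact hinj.leftInvOn_invFunOn hp
  · rintro y ⟨p, hp, rfl⟩
    exact Function.invFunOn_eq ⟨p, hp, rfl⟩
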